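/- Let R be a commutative ring, J₁, …, J_k ideals of R, and 1 ≤ l ≤ k. Suppose f ∈ R[t₁^{±1}, …, t_k^{±1}] is such that for every multidegree (m₁, …, m_k) ∈ ℤ^k the corresponding coefficient of f lies in the product ideal J_{l+1}^{max(−m_{l+1},0)} ⋯ J_k^{max(−m_k,0)} (i.e., f satisfies the extended Rees coefficient condition with respect to the last k−l ideals only). Then there exists a natural number N such that (t₁ ⋯ t_l)^N · f ∈ A(J₁, …, J_k). In particular (taking l = k), for every f ∈ R[t₁^{±1}, …, t_k^{±1}] there exists N with (t₁ ⋯ t_k)^N · f ∈ A(J₁, …, J_k). -/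

import Mathlib

/-!
The coefficient of `t^v · f` at `m` is the coefficient of `f` at `m - v`. Since `f` has finitely
many monomials, their exponents are bounded below by some `-N`; shifting by `N` in the first `l`
coordinates makes those exponents nonnegative, so the corresponding ideal powers become `R` and the
remaining factors of the Rees condition are untouched.
-/

/-- The multivariable extended Rees algebra
`A(J₁, …, J_k) ⊆ R[t₁^{±1}, …, t_k^{±1}]` (the monoid algebra of `ℤ^k` over
`R`), as a set. -/
def multiReesSet {R : Type*} [CommRing R] {k : ℕ} (Js : Fin k → Ideal R) :
    Set (AddMonoidAlgebra R (Fin k → ℤ)) :=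
  {f | ∀ m : Fin k → ℤ, f.coeff m ∈ ∏ i, Js i ^ (-(m i)).toNat}

theorem Finset.exists_natCast_neg_le {ι : Type*} [Finite ι] (s : Finset (ι → ℤ)) :
    ∃ N : ℕ, ∀ m ∈ s, ∀ i, -(N : ℤ) ≤ m i := by
  obtain ⟨b, hb⟩ := s.bddBelow
  obtain ⟨N, hN⟩ := Finite.exists_le fun i => (-(b i)).toNat
  refine ⟨N, fun m hm i => ?_⟩
  have hbm : b i ≤ m i := hb hm i
  have := hN i
  omega

section

variable {R : Type*} [CommRing R] {k : ℕ} (Js : Fin k → Ideal R)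

theorem single_mul_mem_multiReesSet (P : Fin k → Prop) [DecidablePred P]
    {f : AddMonoidAlgebra R (Fin k → ℤ)} {N : ℕ}
    (hN : ∀ m ∈ f.coeff.support, ∀ i, -(N : ℤ) ≤ m i)
    (hf : ∀ m : Fin k → ℤ,
      f.coeff m ∈ ∏ i ∈ Finset.univ.filter (fun i => ¬ P i), Js i ^ (-(m i)).toNat) :
    AddMonoidAlgebra.single (fun j => if P j then (N : ℤ) else 0) (1 : R) * f
      ∈ multiReesSet Js := by
  set v : Fin k → ℤ := fun j => if P j then (N : ℤ) else 0
  intro m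
  rw [AddMonoidAlgebra.coeff_single_mul_apply, one_mul]
  by_cases hm : f.coeff (-v + m) = 0
  · rw [hm]
    exact zero_mem _
  have hshift := hN _ (Finsupp.mem_support_iff.mpr hm)
  have hcleared : ∀ i, Js i ^ (-(m i)).toNat ≠ 1 → ¬ P i := by
    intro i hne hP
    have := hshift i
    simp only [v, Pi.add_apply, Pi.neg_apply, if_pos hP] at this
    exact hne (by rw [show (-(m i)).toNat = 0 by omega, pow_zero])
  rw [← Finset.prod_filter_of_ne fun i _ => hcleared i]
  convert hf (-v + m) using 2 with i hi
  simp [v, (Finset.mem_filter.mp hi).2]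

end

theorem multiRees_clear_denominators_general {R : Type*} [CommRing R] {k : ℕ}
    (l : ℕ) (Js : Fin k → Ideal R) :
    (∀ f : AddMonoidAlgebra R (Fin k → ℤ),
      (∀ m : Fin k → ℤ,
          f.coeff m ∈ ∏ i ∈ Finset.univ.filter (fun i : Fin k => l ≤ (i : ℕ)),
            Js i ^ (-(m i)).toNat) →
      ∃ N : ℕ,
        AddMonoidAlgebra.single (fun j : Fin k => if (j : ℕ) < l then (N : ℤ) else 0)
            (1 : R) * f ∈ multiReesSet Js) ∧
    (∀ f : AddMonoidAlgebra R (Fin k → ℤ),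
      ∃ N : ℕ,
        AddMonoidAlgebra.single (fun _ : Fin k => (N : ℤ)) (1 : R) * f
          ∈ multiReesSet Js) := by
  constructor
  · intro f hf
    obtain ⟨N, hN⟩ := f.coeff.support.exists_natCast_neg_le
    refine ⟨N, single_mul_mem_multiReesSet Js (fun i => (i : ℕ) < l) hN fun m => ?_⟩
    simpa only [not_lt] using hf m
  · intro f
    obtain ⟨N, hN⟩ := f.coeff.support.exists_natCast_neg_le
    refine ⟨N, ?_⟩
    simpa using single_mul_mem_multiReesSet Js (fun _ => True) hN fun m => by simp

/-- Let `1 ≤ l ≤ k`.  If `f ∈ R[t₁^{±1}, …, t_k^{±1}]`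
satisfies the extended Rees coefficient condition with respect to the last
`k - l` ideals only, then `(t₁ ⋯ t_l)^N · f ∈ A(J₁, …, J_k)` for some natural
number `N`; here `(t₁ ⋯ t_l)^N` is the monomial with exponent `N` at the first
`l` coordinates and `0` elsewhere.  In particular (as in the case `l = k`),
for every `f` there is an `N` with `(t₁ ⋯ t_k)^N · f ∈ A(J₁, …, J_k)`. -/
theorem multiRees_clear_denominators {R : Type*} [CommRing R] {k : ℕ}
    (l : ℕ) (hl : 1 ≤ l) (hlk : l ≤ k) (Js : Fin k → Ideal R) :
    (∀ f : AddMonoidAlgebra R (Fin k → ℤ),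
      (∀ m : Fin k → ℤ,
          f.coeff m ∈ ∏ i ∈ Finset.univ.filter (fun i : Fin k => l ≤ (i : ℕ)),
            Js i ^ (-(m i)).toNat) →
      ∃ N : ℕ,
        AddMonoidAlgebra.single (fun j : Fin k => if (j : ℕ) < l then (N : ℤ) else 0)
            (1 : R) * f ∈ multiReesSet Js) ∧
    (∀ f : AddMonoidAlgebra R (Fin k → ℤ),
      ∃ N : ℕ,
        AddMonoidAlgebra.single (fun _ : Fin k => (N : ℤ)) (1 : R) * f
          ∈ multiReesSet Js) :=
  multiRees_clear_denominators_general l Js
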